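/- arXiv:2312.17488 — 6 statements merged into one kernel-verified Lean document; each statement's English description precedes it below -/
import Mathlib

section
/- In a directed graph g with a distinguished source s, for any non-source vertex u, the number of vertices reachable from s in g equals the number of vertices reachable from s in the induced subgraph on V(g) \ {u} plus the number of vertices v such that v is reachable from s in g but every path from s to v passes through u. -/
/-!
Since `u ≠ s`, a vertex is reachable from `s` in `g - u` exactly when some walk from `s` to it
avoids `u`, i.e. when it is reachable in `g` but not dominated by `u`. So the reachable set of
`g` splits into the reachable set of `g - u` and the vertices dominated by `u`.
-/

/-- Reachability from `s` in the induced subgraph of the digraph `adj` obtained by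
deleting the vertex set `B` (all steps avoid `B`). -/
def reachOutside {V : Type*} (adj : V → V → Prop) (B : Set V) (s v : V) : Prop :=
  Relation.ReflTransGen (fun a b => adj a b ∧ a ∉ B ∧ b ∉ B) s v

/-- `p` is a directed walk (as a list of vertices) from `s` to `v` in the digraph `adj`. -/
def IsWalk {V : Type*} (adj : V → V → Prop) (s v : V) (p : List V) : Prop :=
  p.Chain' adj ∧ p.head? = some s ∧ p.getLast? = some v

section Reachability

variable {V : Type*} {adj : V → V → Prop} {B : Set V} {s u v : V}

theorem IsWalk.reachOutside {p : List V} (hp : IsWalk adj s v p) (hB : ∀ x ∈ p, x ∉ B) :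
    reachOutside adj B s v := by
  obtain ⟨hchain, hhead, hlast⟩ := hp
  have hne : p ≠ [] := by rintro rfl; simp at hhead
  rw [List.head?_eq_some_head hne, Option.some_inj] at hhead
  rw [List.getLast?_eq_some_getLast hne, Option.some_inj] at hlast
  have hchain' : p.IsChain (fun a b => adj a b ∧ a ∉ B ∧ b ∉ B) :=
    (List.IsChain.iff_mem.1 hchain).imp fun a b ⟨ha, hb, hab⟩ => ⟨hab, hB a ha, hB b hb⟩
  rw [← hhead, ← hlast]
  exact List.relationReflTransGen_of_exists_isChain p hchain' hne

theorem reachOutside.exists_isWalk (h : reachOutside adj B s v) (hs : s ∉ B) :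
    ∃ p, IsWalk adj s v p ∧ ∀ x ∈ p, x ∉ B := by
  obtain ⟨p, hne, hchain, hhead, hlast⟩ := List.exists_isChain_ne_nil_of_relationReflTransGen h
  refine ⟨p, ⟨hchain.imp fun _ _ hab => hab.1, ?_, ?_⟩, ?_⟩
  · rw [List.head?_eq_some_head hne, hhead]
  · rw [List.getLast?_eq_some_getLast hne, hlast]
  · exact hchain.induction (· ∉ B) p (fun _ _ hab _ => hab.2.2) fun _ => hhead ▸ hs

theorem reachOutside.mono {B' : Set V} (hBB' : B ⊆ B') (h : reachOutside adj B' s v) :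
    reachOutside adj B s v :=
  Relation.ReflTransGen.mono (fun _ _ ⟨hab, ha, hb⟩ => ⟨hab, mt (@hBB' _) ha, mt (@hBB' _) hb⟩)
    _ _ h

variable (adj s u v) in
def Dominates : Prop :=
  ∀ p : List V, IsWalk adj s v p → u ∈ p

theorem reachOutside_singleton_iff (hu : u ≠ s) :
    reachOutside adj {u} s v ↔ reachOutside adj ∅ s v ∧ ¬Dominates adj s u v := by
  constructor
  · intro h
    obtain ⟨p, hp, hpu⟩ := h.exists_isWalk (Set.notMem_singleton_iff.2 hu.symm)
    exact ⟨h.mono (Set.empty_subset _), fun hdom => hpu u (hdom p hp) rfl⟩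
  · rintro ⟨-, hdom⟩
    obtain ⟨p, hp, hup⟩ := not_forall₂.1 hdom
    exact hp.reachOutside fun x hx hxu => hup (hxu ▸ hx)

end Reachability

/-- the number of vertices reachable from `s` equals the number reachable
after deleting `u` plus the number of vertices reachable from `s` all of whose
paths from `s` pass through `u`. -/
theorem stmt0 {V : Type*} [Fintype V] (adj : V → V → Prop) (s u : V) (hu : u ≠ s) :
    {v | reachOutside adj (∅ : Set V) s v}.ncard =
      {v | reachOutside adj ({u} : Set V) s v}.ncard +
        {v | reachOutside adj (∅ : Set V) s v ∧
              ∀ p : List V, IsWalk adj s v p → u ∈ p}.ncard := by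
  have havoid : {v | reachOutside adj ∅ s v} \ {v | Dominates adj s u v} =
      {v | reachOutside adj {u} s v} := by
    ext v
    exact (reachOutside_singleton_iff hu).symm
  rw [← Set.ncard_inter_add_ncard_sdiff_eq_ncard {v | reachOutside adj ∅ s v}
    {v | Dominates adj s u v}, havoid, add_comm]
  rfl
end

section
/- Let g be a directed graph with source s in which every vertex has in-degree at most 1. Define, for a set B of vertices not containing s, f(B) to be the number of vertices reachable from s in the induced subgraph on V(g) \ B. Then f is supermodular: for all sets X ⊆ Y of vertices with s ∉ Y and any vertex u ∉ Y with u ≠ s, f(X) − f(X ∪ {u}) ≥ f(Y) − f(Y ∪ {u}). -/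
/-- `fCount adj s B` is the number of vertices reachable from `s` after deleting
the vertex set `B`. -/
noncomputable def fCount {V : Type*} (adj : V → V → Prop) (s : V) (B : Set V) : ℕ :=
  {v | reachOutside adj B s v}.ncard

namespace reachOutside

variable {V : Type*} {adj : V → V → Prop} {s : V}

theorem anti {B B' : Set V} (hB : B ⊆ B') {v : V} (h : reachOutside adj B' s v) :
    reachOutside adj B s v :=
  Relation.ReflTransGen.mono
    (fun _ _ ⟨hab, ha, hb⟩ => ⟨hab, fun h => ha (hB h), fun h => hb (hB h)⟩) _ _ h

theorem union (hindeg : ∀ v a b, adj a v → adj b v → a = b) {B B' : Set V} {v : V}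
    (h : reachOutside adj B s v) (h' : reachOutside adj B' s v) :
    reachOutside adj (B ∪ B') s v := by
  induction h with
  | refl => exact .refl
  | @tail a c _ hac ih =>
    rcases h'.cases_tail with rfl | ⟨b, hsb, hbc⟩
    · exact .refl
    · obtain rfl : b = a := hindeg c b a hbc.1 hac.1
      exact (ih hsb).tail ⟨hac.1, not_or.2 ⟨hac.2.1, hbc.2.1⟩, not_or.2 ⟨hac.2.2, hbc.2.2⟩⟩

theorem diff_subset_diff (hindeg : ∀ v a b, adj a v → adj b v → a = b) {X Y : Set V}
    (hXY : X ⊆ Y) (Z : Set V) :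
    {v | reachOutside adj Y s v} \ {v | reachOutside adj (Y ∪ Z) s v} ⊆
      {v | reachOutside adj X s v} \ {v | reachOutside adj (X ∪ Z) s v} := by
  rintro v ⟨hY, hYZ⟩
  refine ⟨anti hXY hY, fun hXZ => hYZ ?_⟩
  have hYXZ : Y ∪ (X ∪ Z) = Y ∪ Z := by
    rw [← Set.union_assoc, Set.union_eq_self_of_subset_right hXY]
  simpa only [Set.mem_ofPred_eq, hYXZ] using union hindeg hY hXZ

end reachOutside

theorem fCount_sub_fCount_of_subset {V : Type*} [Finite V] (adj : V → V → Prop) (s : V)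
    {B B' : Set V} (hB : B ⊆ B') :
    (fCount adj s B : ℤ) - fCount adj s B' =
      ({v | reachOutside adj B s v} \ {v | reachOutside adj B' s v}).ncard :=
  (Set.cast_ncard_sdiff (fun _ => reachOutside.anti hB) (Set.toFinite _)).symm

theorem fCount_supermodular {V : Type*} [Finite V] (adj : V → V → Prop) (s : V)
    (hindeg : ∀ v a b, adj a v → adj b v → a = b) {X Y : Set V} (hXY : X ⊆ Y) (Z : Set V) :
    (fCount adj s Y : ℤ) - fCount adj s (Y ∪ Z) ≤ (fCount adj s X : ℤ) - fCount adj s (X ∪ Z) := by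
  rw [fCount_sub_fCount_of_subset adj s Set.subset_union_left,
    fCount_sub_fCount_of_subset adj s Set.subset_union_left]
  exact_mod_cast Set.ncard_le_ncard (reachOutside.diff_subset_diff hindeg hXY Z) (Set.toFinite _)

/-- if every vertex has in-degree at most 1, the reachable-count
function after vertex deletion is supermodular in the deleted set. -/
theorem stmt4 {V : Type*} [Fintype V] (adj : V → V → Prop) (s : V)
    (hindeg : ∀ v a b, adj a v → adj b v → a = b) :
    ∀ (X Y : Set V) (u : V), X ⊆ Y → s ∉ Y → u ∉ Y → u ≠ s →
      (fCount adj s X : ℤ) - fCount adj s (X ∪ {u}) ≥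
        (fCount adj s Y : ℤ) - fCount adj s (Y ∪ {u}) :=
  fun _ _ u hXY _ _ _ => fCount_supermodular adj s hindeg hXY {u}
end

section
/- Consider the reduction from the densest-k-subgraph instance: given an undirected graph G = (V, E) with |V| = n, |E| = m, construct a directed graph G' with vertex set {S} ∪ {c_i : v_i ∈ V} ∪ {d_j : e_j ∈ E}, with edges S → c_i for all i, and c_x → d_j, c_y → d_j for each edge e_j = (v_x, v_y). Then for any subset A ⊆ V, deleting the corresponding set B = {c_i : v_i ∈ A} from G' decreases the number of S-reachable vertices by exactly |A| + g, where g is the number of edges of G with both endpoints in A. -/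
/-- Vertices of the DKS-reduction digraph `G'`: the seed `S`, one vertex `c_i` per
vertex of `G`, and one vertex `d_e` per edge of `G`. -/
abbrev DKSVert (n : ℕ) (G : SimpleGraph (Fin n)) : Type := Unit ⊕ (Fin n) ⊕ G.edgeSet

/-- Edges of `G'`: `S → c_i` for every `i`, and `c_x → d_e` whenever `x` is an
endpoint of edge `e`. -/
def dksAdj {n : ℕ} (G : SimpleGraph (Fin n)) : DKSVert n G → DKSVert n G → Prop :=
  fun a b =>
    match a, b with
    | Sum.inl _, Sum.inr (Sum.inl _) => True
    | Sum.inr (Sum.inl x), Sum.inr (Sum.inr e) => x ∈ (e : Sym2 (Fin n))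
    | _, _ => False

namespace DKSAux

variable {n : ℕ} {G : SimpleGraph (Fin n)}

/-- The characterizing predicate for reachability after deleting the `c`-vertices of `A`. -/
def pred (A : Set (Fin n)) : DKSVert n G → Prop
  | Sum.inl _ => True
  | Sum.inr (Sum.inl i) => i ∉ A
  | Sum.inr (Sum.inr e) => ∃ x ∈ (e : Sym2 (Fin n)), x ∉ A

lemma mem_B_iff {A : Set (Fin n)} {v : DKSVert n G} :
    v ∈ (fun i => (Sum.inr (Sum.inl i) : DKSVert n G)) '' A ↔
      ∃ i ∈ A, v = Sum.inr (Sum.inl i) := by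
  constructor <;> rintro ⟨i, hi, rfl⟩ <;> exact ⟨i, hi, rfl⟩

lemma reach_iff {A : Set (Fin n)} (v : DKSVert n G) :
    reachOutside (dksAdj G) ((fun i => (Sum.inr (Sum.inl i) : DKSVert n G)) '' A)
      (Sum.inl ()) v ↔ pred A v := by
  constructor
  · intro h
    induction h with
    | refl => trivial
    | tail hab hstep ih =>
      obtain ⟨hadj, ha, hb⟩ := hstep
      rename_i a b
      match a, b with
      | Sum.inl _, Sum.inr (Sum.inl i) =>
        simp only [pred]
        intro hi
        exact hb (⟨i, hi, rfl⟩)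
      | Sum.inr (Sum.inl x), Sum.inr (Sum.inr e) =>
        refine ⟨x, hadj, ?_⟩
        intro hx
        exact ha ⟨x, hx, rfl⟩
      | Sum.inl _, Sum.inl _ => exact hadj.elim
      | Sum.inl _, Sum.inr (Sum.inr _) => exact hadj.elim
      | Sum.inr (Sum.inl _), Sum.inl _ => exact hadj.elim
      | Sum.inr (Sum.inl _), Sum.inr (Sum.inl _) => exact hadj.elim
      | Sum.inr (Sum.inr _), _ => exact hadj.elim
  · intro h
    have hS : (Sum.inl () : DKSVert n G) ∉
        (fun i => (Sum.inr (Sum.inl i) : DKSVert n G)) '' A := by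
      rintro ⟨i, -, h⟩; exact absurd h (by simp)
    match v with
    | Sum.inl u => cases u; exact Relation.ReflTransGen.refl
    | Sum.inr (Sum.inl i) =>
      have hc : (Sum.inr (Sum.inl i) : DKSVert n G) ∉
          (fun i => (Sum.inr (Sum.inl i) : DKSVert n G)) '' A := by
        rintro ⟨j, hj, hji⟩
        simp only [Sum.inr.injEq, Sum.inl.injEq] at hji
        exact h (hji ▸ hj)
      exact Relation.ReflTransGen.single ⟨trivial, hS, hc⟩
    | Sum.inr (Sum.inr e) =>
      obtain ⟨x, hxe, hxA⟩ := h
      have hc : (Sum.inr (Sum.inl x) : DKSVert n G) ∉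
          (fun i => (Sum.inr (Sum.inl i) : DKSVert n G)) '' A := by
        rintro ⟨j, hj, hji⟩
        simp only [Sum.inr.injEq, Sum.inl.injEq] at hji
        exact hxA (hji ▸ hj)
      have hd : (Sum.inr (Sum.inr e) : DKSVert n G) ∉
          (fun i => (Sum.inr (Sum.inl i) : DKSVert n G)) '' A := by
        rintro ⟨j, -, hji⟩
        exact absurd hji (by simp)
      exact Relation.ReflTransGen.head
        ⟨(show dksAdj G (Sum.inl ()) (Sum.inr (Sum.inl x)) from trivial), hS, hc⟩
        (Relation.ReflTransGen.single ⟨hxe, hc, hd⟩)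

lemma reach_set_eq (A : Set (Fin n)) :
    {v : DKSVert n G | reachOutside (dksAdj G)
        ((fun i => (Sum.inr (Sum.inl i) : DKSVert n G)) '' A) (Sum.inl ()) v} =
      ({Sum.inl ()} : Set (DKSVert n G)) ∪
        ((fun i => (Sum.inr (Sum.inl i) : DKSVert n G)) '' Aᶜ) ∪
        ((fun e => (Sum.inr (Sum.inr e) : DKSVert n G)) ''
          {e : G.edgeSet | ∃ x ∈ (e : Sym2 (Fin n)), x ∉ A}) := by
  ext v
  rw [Set.mem_setOf_eq, reach_iff]
  match v with
  | Sum.inl u => cases u; simp [pred]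
  | Sum.inr (Sum.inl i) => simp [pred]
  | Sum.inr (Sum.inr e) => simp [pred]

lemma fCount_eq (A : Set (Fin n)) :
    fCount (dksAdj G) (Sum.inl ())
        ((fun i => (Sum.inr (Sum.inl i) : DKSVert n G)) '' A) =
      1 + Aᶜ.ncard + {e : G.edgeSet | ∃ x ∈ (e : Sym2 (Fin n)), x ∉ A}.ncard := by
  rw [fCount, reach_set_eq]
  have hinj1 : Function.Injective (fun i => (Sum.inr (Sum.inl i) : DKSVert n G)) :=
    fun a b h => by simpa using h
  have hinj2 : Function.Injective (fun e => (Sum.inr (Sum.inr e) : DKSVert n G)) :=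
    fun a b h => by simpa using h
  have hfin : ∀ s : Set (DKSVert n G), s.Finite := fun s => s.toFinite
  rw [Set.ncard_union_eq ?_ (hfin _) (hfin _), Set.ncard_union_eq ?_ (hfin _) (hfin _)]
  · rw [Set.ncard_singleton, Set.ncard_image_of_injective _ hinj1,
      Set.ncard_image_of_injective _ hinj2]
  · rw [Set.disjoint_left]
    rintro v ⟨i, -, rfl⟩ ⟨e, -, h⟩
    exact absurd h (by simp)
  · rw [Set.disjoint_left]
    rintro v hv ⟨e, -, rfl⟩
    rcases hv with hv | ⟨i, -, hv⟩
    · exact absurd hv (by simp)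
    · exact absurd hv (by simp)

end DKSAux

/-- deleting the `c`-vertices corresponding to `A ⊆ V` decreases the
number of `S`-reachable vertices of `G'` by exactly `|A| + g`, where `g` is the number
of edges of `G` with both endpoints in `A`. -/
theorem stmt10 (n : ℕ) (G : SimpleGraph (Fin n)) (A : Set (Fin n)) :
    fCount (dksAdj G) (Sum.inl ()) (∅ : Set (DKSVert n G)) =
      fCount (dksAdj G) (Sum.inl ())
          ((fun i => (Sum.inr (Sum.inl i) : DKSVert n G)) '' A) +
        A.ncard +
        {e : G.edgeSet | ∀ x ∈ (e : Sym2 (Fin n)), x ∈ A}.ncard := by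
  have h0 : (∅ : Set (DKSVert n G)) =
      (fun i => (Sum.inr (Sum.inl i) : DKSVert n G)) '' (∅ : Set (Fin n)) := by
    simp
  rw [h0, DKSAux.fCount_eq, DKSAux.fCount_eq]
  have h1 : {e : G.edgeSet | ∃ x ∈ (e : Sym2 (Fin n)), x ∉ (∅ : Set (Fin n))} =
      Set.univ := by
    refine Set.eq_univ_of_forall fun e =>
      ⟨(e : Sym2 (Fin n)).out.1, Sym2.out_fst_mem _, by simp⟩
  have h2 : {e : G.edgeSet | ∀ x ∈ (e : Sym2 (Fin n)), x ∈ A} =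
      {e : G.edgeSet | ∃ x ∈ (e : Sym2 (Fin n)), x ∉ A}ᶜ := by
    ext e; simp [not_exists]
  have hA := Set.ncard_add_ncard_compl A
  have hE := Set.ncard_add_ncard_compl {e : G.edgeSet | ∃ x ∈ (e : Sym2 (Fin n)), x ∉ A}
  rw [h1, h2]
  simp only [Set.compl_empty, Set.ncard_univ] at *
  omega
end

section
/- In the graph G' of the DKS reduction (S → c_i for all i; c_x → d_j and c_y → d_j for each edge e_j = (v_x,v_y)), every d_j has out-degree 0, and for any vertex set B ⊆ {c_i} ∪ {d_j} with |B| ≤ b, there exists a set B' ⊆ {c_i} with |B'| ≤ b such that the number of S-reachable vertices after deleting B' is at most the number after deleting B. Hence an optimal blocker set can be chosen entirely among the c-vertices. -/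
/-!
Since a `d`-vertex is a sink, blocking it hides nothing but itself. A blocked `d_e` can therefore
be traded for the `c`-vertex of an endpoint of `e`: if some endpoint `c_x` is still reachable,
blocking it instead hides `c_x` and reveals at most `d_e`; if both endpoints are blocked, `d_e` is
unreachable anyway and unblocking it costs nothing. Each trade removes one `d`-vertex from the
blocker set without enlarging it.
-/

section Sink

variable {V : Type*} {adj : V → V → Prop} {s c d : V} {B : Set V}

theorem reachOutside_insert_diff_of_sink (hd : ∀ w, ¬ adj d w) (hcs : c ≠ s) {v : V}
    (hv : reachOutside adj (insert c (B \ {d})) s v) :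
    v = d ∨ (reachOutside adj B s v ∧ v ≠ c) := by
  induction hv with
  | refl => exact Or.inr ⟨Relation.ReflTransGen.refl, hcs.symm⟩
  | @tail a v _ hav ih =>
    obtain ⟨hadj, ha, hv⟩ := hav
    rcases ih with rfl | ⟨hsa, -⟩
    · exact absurd hadj (hd v)
    by_cases hvd : v = d
    · exact Or.inl hvd
    have haB : a ∉ B := fun h => ha (Or.inr ⟨h, fun had => hd v (had ▸ hadj)⟩)
    exact Or.inr ⟨hsa.tail ⟨hadj, haB, fun h => hv (Or.inr ⟨h, hvd⟩)⟩, fun h => hv (Or.inl h)⟩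

theorem reachOutside_of_diff_sink (hd : ∀ w, ¬ adj d w) (hin : ∀ a, adj a d → a ∈ B) {v : V}
    (hv : reachOutside adj (B \ {d}) s v) : reachOutside adj B s v := by
  induction hv with
  | refl => exact Relation.ReflTransGen.refl
  | @tail a v _ hav ih =>
    obtain ⟨hadj, ha, hv⟩ := hav
    have had : a ≠ d := fun h => hd v (h ▸ hadj)
    have hvd : v ≠ d := fun h => ha ⟨hin a (h ▸ hadj), had⟩
    exact ih.tail ⟨hadj, fun h => ha ⟨h, had⟩, fun h => hv ⟨h, hvd⟩⟩

variable [Finite V]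

theorem fCount_insert_diff_le_of_sink (hd : ∀ w, ¬ adj d w) (hcs : c ≠ s)
    (hc : reachOutside adj B s c) :
    fCount adj s (insert c (B \ {d})) ≤ fCount adj s B := by
  have hsub : {v | reachOutside adj (insert c (B \ {d})) s v} ⊆
      insert d ({v | reachOutside adj B s v} \ {c}) := fun v hv =>
    (reachOutside_insert_diff_of_sink hd hcs hv).imp id fun h => ⟨h.1, h.2⟩
  calc fCount adj s (insert c (B \ {d}))
      ≤ (insert d ({v | reachOutside adj B s v} \ {c})).ncard := Set.ncard_le_ncard hsub
    _ ≤ ({v | reachOutside adj B s v} \ {c}).ncard + 1 := Set.ncard_insert_le _ _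
    _ = fCount adj s B := Set.ncard_sdiff_singleton_add_one hc

theorem fCount_diff_le_of_sink (hd : ∀ w, ¬ adj d w) (hin : ∀ a, adj a d → a ∈ B) :
    fCount adj s (B \ {d}) ≤ fCount adj s B :=
  Set.ncard_le_ncard fun _ => reachOutside_of_diff_sink hd hin

end Sink

section DKS

variable {n : ℕ} (G : SimpleGraph (Fin n))

theorem not_dksAdj_inr_inr (e : G.edgeSet) (w : DKSVert n G) :
    ¬ dksAdj G (Sum.inr (Sum.inr e)) w := by
  rcases w with _ | _ | _ <;> simp [dksAdj]

theorem exists_mem_eq_of_dksAdj_inr_inr {a : DKSVert n G} {e : G.edgeSet}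
    (h : dksAdj G a (Sum.inr (Sum.inr e))) :
    ∃ x ∈ (e : Sym2 (Fin n)), a = Sum.inr (Sum.inl x) := by
  rcases a with _ | x | _
  · simp [dksAdj] at h
  · exact ⟨x, h, rfl⟩
  · simp [dksAdj] at h

theorem exists_fCount_insert_inr_inl_diff_le (B : Set (DKSVert n G)) (hS : Sum.inl () ∉ B)
    (e : G.edgeSet) :
    ∃ x : Fin n, fCount (dksAdj G) (Sum.inl ())
        (insert (Sum.inr (Sum.inl x)) (B \ {Sum.inr (Sum.inr e)})) ≤
      fCount (dksAdj G) (Sum.inl ()) B := by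
  by_cases hfree : ∃ x ∈ (e : Sym2 (Fin n)), Sum.inr (Sum.inl x) ∉ B
  · obtain ⟨x, -, hx⟩ := hfree
    exact ⟨x, fCount_insert_diff_le_of_sink (not_dksAdj_inr_inr G e) Sum.inr_ne_inl
      (.single ⟨trivial, hS, hx⟩)⟩
  · push Not at hfree
    -- both endpoints are blocked, so `d_e` is unreachable anyway and inserting `c_x` is a no-op
    let x := (e : Sym2 (Fin n)).out.1
    refine ⟨x, ?_⟩
    rw [Set.insert_eq_of_mem (show _ ∈ B \ _ from ⟨hfree x (Sym2.out_fst_mem _), by simp⟩)]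
    refine fCount_diff_le_of_sink (not_dksAdj_inr_inr G e) fun a ha => ?_
    obtain ⟨y, hy, rfl⟩ := exists_mem_eq_of_dksAdj_inr_inr G ha
    exact hfree y hy

theorem exists_blocker_subset_inr_inl (B : Set (DKSVert n G)) (hS : Sum.inl () ∉ B) :
    ∃ B' ⊆ {w : DKSVert n G | ∃ i : Fin n, w = Sum.inr (Sum.inl i)},
      B'.ncard ≤ B.ncard ∧
        fCount (dksAdj G) (Sum.inl ()) B' ≤ fCount (dksAdj G) (Sum.inl ()) B := by
  set C := {w : DKSVert n G | ∃ i : Fin n, w = Sum.inr (Sum.inl i)}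
  induction hk : (B \ C).ncard generalizing B with
  | zero => exact ⟨B, Set.sdiff_eq_empty.mp ((Set.ncard_eq_zero).mp hk), le_rfl, le_rfl⟩
  | succ k ih =>
    obtain ⟨v, hvB, hvC⟩ : (B \ C).Nonempty := Set.nonempty_of_ncard_ne_zero (by omega)
    rcases v with _ | i | e
    · exact absurd hvB hS
    · exact absurd ⟨i, rfl⟩ hvC
    obtain ⟨x, hx⟩ := exists_fCount_insert_inr_inl_diff_le G B hS e
    obtain ⟨B', hB'C, hcard, hf⟩ := ih (insert (Sum.inr (Sum.inl x)) (B \ {Sum.inr (Sum.inr e)}))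
      (by simp [hS]) (by
        rw [Set.insert_sdiff_of_mem _ (show _ ∈ C from ⟨x, rfl⟩), Set.sdiff_sdiff_comm,
          Set.ncard_sdiff_singleton_of_mem (show _ ∈ B \ C from ⟨hvB, hvC⟩), hk,
          Nat.add_sub_cancel])
    refine ⟨B', hB'C, ?_, hf.trans hx⟩
    calc B'.ncard ≤ _ := hcard
      _ ≤ (B \ {Sum.inr (Sum.inr e)}).ncard + 1 := Set.ncard_insert_le _ _
      _ = B.ncard := Set.ncard_sdiff_singleton_add_one hvB

end DKS

/-- every `d`-vertex of `G'` has out-degree 0, and for any blocker set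
`B` of non-seed vertices with `|B| ≤ b` there is a blocker set `B'` consisting only of
`c`-vertices with `|B'| ≤ b` that is at least as good. -/
theorem stmt11 (n b : ℕ) (G : SimpleGraph (Fin n)) :
    (∀ (e : G.edgeSet) (w : DKSVert n G), ¬ dksAdj G (Sum.inr (Sum.inr e)) w) ∧
    (∀ B : Set (DKSVert n G), (Sum.inl () : DKSVert n G) ∉ B → B.ncard ≤ b →
      ∃ B' : Set (DKSVert n G),
        B' ⊆ {w | ∃ i : Fin n, w = Sum.inr (Sum.inl i)} ∧ B'.ncard ≤ b ∧
          fCount (dksAdj G) (Sum.inl ()) B' ≤ fCount (dksAdj G) (Sum.inl ()) B) := by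
  refine ⟨not_dksAdj_inr_inr G, fun B hS hb => ?_⟩
  obtain ⟨B', hB'C, hcard, hf⟩ := exists_blocker_subset_inr_inl G B hS
  exact ⟨B', hB'C, hcard.trans hb, hf⟩
end

section
/- In the split graph G' of the node-to-edge reduction, for every edge e = (x^out, y^in) of G' arising from an original edge (x, y) of G with x ≠ s, deleting the edge (x^in, x^out) makes unreachable from s^in every vertex that deleting (x^out, y^in) makes unreachable from s^in; in particular, the decrease in the number of s^in-reachable vertices caused by deleting e is at most the decrease caused by deleting (x^in, x^out). -/
/-- The split digraph `G'` of `adj`: each vertex `v` becomes `v^in = (v, false)` and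
`v^out = (v, true)`, with edges `v^in → v^out` and `x^out → y^in` for each edge
`(x, y)` of `G`. -/
def splitAdj {V : Type*} (adj : V → V → Prop) : V × Bool → V × Bool → Prop :=
  fun a b =>
    match a, b with
    | (v, false), (w, true) => v = w
    | (x, true), (y, false) => adj x y
    | _, _ => False

/-- Reachability from `s` after deleting the single edge `e` from the digraph. -/
def reachDelEdge {W : Type*} (adj : W → W → Prop) (e : W × W) (s w : W) : Prop :=
  Relation.ReflTransGen (fun a b => adj a b ∧ (a, b) ≠ e) s w

theorem stmt13_aux {V : Type*} (adj : V → V → Prop) (s x y : V) (w : V × Bool)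
    (h : reachDelEdge (splitAdj adj) ((x, false), (x, true)) (s, false) w) :
    reachDelEdge (splitAdj adj) ((x, true), (y, false)) (s, false) w ∧ w ≠ (x, true) := by
  induction h with
  | refl => exact ⟨Relation.ReflTransGen.refl, by simp⟩
  | @tail b c hab hbc ih =>
    obtain ⟨hadj, hne⟩ := hbc
    have hc : c ≠ (x, true) := by
      rintro rfl
      obtain ⟨v, bv⟩ := b
      cases bv
      · have hv : v = x := hadj
        subst hv
        exact hne rfl
      · exact hadj.elim
    refine ⟨ih.1.tail ⟨hadj, fun heq => ?_⟩, hc⟩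
    exact ih.2 (congrArg Prod.fst heq)

/-- in the split graph, for an edge `(x^out, y^in)` arising from an
original edge `(x, y)` with `x ≠ s`, every vertex made unreachable by deleting
`(x^out, y^in)` is also made unreachable by deleting `(x^in, x^out)`. -/
theorem stmt13 {V : Type*} [Fintype V] (adj : V → V → Prop) (s x y : V)
    (hxy : adj x y) (hxs : x ≠ s) :
    ∀ w : V × Bool,
      Relation.ReflTransGen (splitAdj adj) (s, false) w ∧
        ¬ reachDelEdge (splitAdj adj) ((x, true), (y, false)) (s, false) w →
      ¬ reachDelEdge (splitAdj adj) ((x, false), (x, true)) (s, false) w := by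
  intro w ⟨_, hnot⟩ h
  exact hnot (stmt13_aux adj s x y w h).1
end

section
/- Let g be a directed graph with source s where every vertex has in-degree at most 1. Define h(B), for a set B of edges, to be the number of vertices reachable from s in g with the edges of B removed. Then h is monotone non-increasing and supermodular in B: for edge sets X ⊆ Y and any edge e ∉ Y, h(X) − h(X ∪ {e}) ≥ h(Y) − h(Y ∪ {e}). -/
/-- `hCount adj s B` is the number of vertices reachable from `s` after removing the
edge set `B` from the digraph. -/
noncomputable def hCount {V : Type*} (adj : V → V → Prop) (s : V) (B : Set (V × V)) : ℕ :=
  {v | Relation.ReflTransGen (fun a b => adj a b ∧ (a, b) ∉ B) s v}.ncard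

/-!
When every vertex has in-degree at most one, a vertex reachable from `s` is reached by a unique
path. A vertex that is reachable after deleting `Y` but not after deleting `Y ∪ {e}` is one whose
path avoids `Y` and uses `e`; for `X ⊆ Y` that path also avoids `X`, so the vertex is lost when
`e` is deleted from `X` as well. Hence the marginal loss `h(B) - h(B ∪ {e})` counts a set of
vertices that shrinks as `B` grows.
-/

theorem Relation.ReflTransGen.inf_of_pred_eq {V : Type*} {p q : V → V → Prop} {s v : V}
    (hpred : ∀ a b c, p a c → q b c → a = b)
    (hp : Relation.ReflTransGen p s v) (hq : Relation.ReflTransGen q s v) :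
    Relation.ReflTransGen (p ⊓ q) s v := by
  induction hq with
  | refl => exact .refl
  | @tail u w _ hquw ih =>
    rcases hp.cases_tail with rfl | ⟨t, hpst, hptw⟩
    · exact .refl
    · obtain rfl : t = u := hpred t u w hptw hquw
      exact (ih hpst).tail ⟨hptw, hquw⟩

def reachableAfter {V : Type*} (adj : V → V → Prop) (s : V) (B : Set (V × V)) : Set V :=
  {v | Relation.ReflTransGen (fun a b => adj a b ∧ (a, b) ∉ B) s v}

section

variable {V : Type*} (adj : V → V → Prop) (s : V)

theorem hCount_eq_ncard_reachableAfter (B : Set (V × V)) :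
    hCount adj s B = (reachableAfter adj s B).ncard :=
  rfl

theorem reachableAfter_anti {X Y : Set (V × V)} (hXY : X ⊆ Y) :
    reachableAfter adj s Y ⊆ reachableAfter adj s X := fun _ hv =>
  Relation.ReflTransGen.mono (fun _ _ hab => ⟨hab.1, fun h => hab.2 (hXY h)⟩) _ _ hv

theorem hCount_anti [Finite V] {X Y : Set (V × V)} (hXY : X ⊆ Y) :
    hCount adj s Y ≤ hCount adj s X := by
  rw [hCount_eq_ncard_reachableAfter, hCount_eq_ncard_reachableAfter]
  exact Set.ncard_le_ncard (reachableAfter_anti adj s hXY) (Set.toFinite _)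

theorem hCount_sub_hCount_union [Finite V] (B C : Set (V × V)) :
    (hCount adj s B : ℤ) - hCount adj s (B ∪ C) =
      (reachableAfter adj s B \ reachableAfter adj s (B ∪ C)).ncard := by
  have hsub := reachableAfter_anti adj s (Set.subset_union_left : B ⊆ B ∪ C)
  rw [hCount_eq_ncard_reachableAfter, hCount_eq_ncard_reachableAfter, Set.ncard_sdiff hsub,
    Nat.cast_sub (Set.ncard_le_ncard hsub (Set.toFinite _))]

theorem reachableAfter_diff_union_subset (hindeg : ∀ v a b, adj a v → adj b v → a = b)
    {X Y : Set (V × V)} (C : Set (V × V)) (hXY : X ⊆ Y) :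
    reachableAfter adj s Y \ reachableAfter adj s (Y ∪ C) ⊆
      reachableAfter adj s X \ reachableAfter adj s (X ∪ C) := by
  rintro v ⟨hvY, hvYC⟩
  refine ⟨reachableAfter_anti adj s hXY hvY, fun hvXC => hvYC ?_⟩
  have hboth := hvY.inf_of_pred_eq (fun a b c hac hbc => hindeg c a b hac.1 hbc.1) hvXC
  exact Relation.ReflTransGen.mono
    (fun _ _ hab => ⟨hab.1.1, fun h => h.elim hab.1.2 fun hC => hab.2.2 (Or.inr hC)⟩) _ _ hboth

end

/-- if every vertex has in-degree at most 1, the reachable-count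
function after edge removal is monotone non-increasing and supermodular in the
removed edge set. -/
theorem stmt14 {V : Type*} [Fintype V] (adj : V → V → Prop) (s : V)
    (hindeg : ∀ v a b, adj a v → adj b v → a = b) :
    (∀ X Y : Set (V × V), X ⊆ Y → hCount adj s Y ≤ hCount adj s X) ∧
    (∀ (X Y : Set (V × V)) (e : V × V), X ⊆ Y → e ∉ Y →
      (hCount adj s X : ℤ) - hCount adj s (X ∪ {e}) ≥
        (hCount adj s Y : ℤ) - hCount adj s (Y ∪ {e})) := by
  refine ⟨fun X Y hXY => hCount_anti adj s hXY, fun X Y e hXY _ => ?_⟩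
  rw [ge_iff_le, hCount_sub_hCount_union, hCount_sub_hCount_union]
  exact_mod_cast Set.ncard_le_ncard
    (reachableAfter_diff_union_subset adj s hindeg {e} hXY) (Set.toFinite _)
end
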